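/- Let b₁, …, b₆, c₁, …, c₆, s₁, …, s₆ be real numbers satisfying Dietmaier's conditions: b₆ = b₁, b₃ = b₄, b₂ = b₅, c₂ = c₅, c₆b₆ + c₁b₁ = c₃b₃ + c₄b₄, s₆ = s₂, s₃ = s₅, s₁ = s₄ = 0. Then Q₁⁺ = Q₄⁺ and Q₁⁻ = Q₄⁻ as polynomials in ℂ[x]. -/

import Mathlib

open Polynomial

noncomputable section

/-- The quad polynomial `Qᵢ⁺`, with 0-based indexing: `Qp b c s i` is `Q_{i+1}⁺` of the
parameters `b₁,…,b₆ = b 0,…,b 5`, etc. (indices mod 6). -/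
def Qp (b c s : Fin 6 → ℝ) (i : Fin 6) : Polynomial ℂ :=
  (X + C (((b (i+2) * c (i+2) - b i * c i : ℝ) : ℂ) / 2 - ((s i : ℝ) : ℂ) / 2 * Complex.I))^2
  + C (Complex.I / 2 * ((b i * s (i+1) + b (i+2) * s (i+2) + s (i+1) * b (i+2) * c (i+1)
        + s (i+2) * b i * c (i+1) : ℝ) : ℂ)
      - ((b i * b (i+2) * c (i+1) - s (i+1) * s (i+2) * c (i+1) : ℝ) : ℂ) / 2
      + (((s (i+1))^2 + (s (i+2))^2 - (b i)^2 + (b (i+1))^2 - (b (i+2))^2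
        - (b (i+1))^2 * (c (i+1))^2 : ℝ) : ℂ) / 4)

/-- The quad polynomial `Qᵢ⁻`: obtained from `Qᵢ⁺` by negating all `b j`, all `c j`,
and `s₂, s₄, s₆` (the `s j` with odd 0-based index `j`), keeping `s₁, s₃, s₅`. -/
def Qm (b c s : Fin 6 → ℝ) (i : Fin 6) : Polynomial ℂ :=
  Qp (fun j => -b j) (fun j => -c j) (fun j => if j.val % 2 = 1 then -s j else s j) i

/-!
`Q₁⁺` and `Q₄⁺` have the same linear coefficient by the last of Dietmaier's conditions
(`c₆b₆ + c₁b₁ = c₃b₃ + c₄b₄`), and the same constant term because the other conditions turn the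
parameters of `Q₄⁺` into those of `Q₁⁺` with `b₁ ↔ b₃` and `s₂ ↔ s₃` swapped, a symmetry of that
constant term. The sign changes defining `Qᵢ⁻` preserve Dietmaier's conditions, so the same
argument gives `Q₁⁻ = Q₄⁻`.
-/

theorem Qp_eq_Qp_of_swap {b c s : Fin 6 → ℝ} {i j : Fin 6}
    (hshift : b (j + 2) * c (j + 2) - b j * c j = b (i + 2) * c (i + 2) - b i * c i)
    (hs : s j = s i) (hb : b j = b (i + 2)) (hb₁ : b (j + 1) = b (i + 1))
    (hb₂ : b (j + 2) = b i) (hc₁ : c (j + 1) = c (i + 1))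
    (hs₁ : s (j + 1) = s (i + 2)) (hs₂ : s (j + 2) = s (i + 1)) :
    Qp b c s j = Qp b c s i := by
  rw [Qp, Qp, hshift, hs, hb, hb₁, hb₂, hc₁, hs₁, hs₂]
  congr 2
  push_cast
  ring

structure DietmaierConditions (b c s : Fin 6 → ℝ) : Prop where
  hb61 : b 5 = b 0
  hb34 : b 2 = b 3
  hb25 : b 1 = b 4
  hc25 : c 1 = c 4
  hf : c 5 * b 5 + c 0 * b 0 = c 2 * b 2 + c 3 * b 3
  hs62 : s 5 = s 1
  hs35 : s 2 = s 4
  hs1 : s 0 = 0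
  hs4 : s 3 = 0

namespace DietmaierConditions

variable {b c s : Fin 6 → ℝ}

theorem Qp_three_eq_Qp_zero (h : DietmaierConditions b c s) : Qp b c s 3 = Qp b c s 0 := by
  have hshift : b 5 * c 5 - b 3 * c 3 = b 2 * c 2 - b 0 * c 0 := by linear_combination h.hf
  exact Qp_eq_Qp_of_swap hshift (h.hs4.trans h.hs1.symm) h.hb34.symm h.hb25.symm h.hb61
    h.hc25.symm h.hs35.symm h.hs62

theorem flip_signs (h : DietmaierConditions b c s) :
    DietmaierConditions (fun j => -b j) (fun j => -c j)
      (fun j => if j.val % 2 = 1 then -s j else s j) where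
  hb61 := by simp [h.hb61]
  hb34 := by simp [h.hb34]
  hb25 := by simp [h.hb25]
  hc25 := by simp [h.hc25]
  hf := by simpa using h.hf
  hs62 := by simp [h.hs62]
  hs35 := by simp [h.hs35]
  hs1 := by simp [h.hs1]
  hs4 := by simp [h.hs4]

end DietmaierConditions

/-- Dietmaier's conditions imply `Q₁⁺ = Q₄⁺` and `Q₁⁻ = Q₄⁻`. -/
theorem dietmaier_implies_quad_equalities (b c s : Fin 6 → ℝ)
    (hb61 : b 5 = b 0) (hb34 : b 2 = b 3) (hb25 : b 1 = b 4)
    (hc25 : c 1 = c 4)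
    (hf : c 5 * b 5 + c 0 * b 0 = c 2 * b 2 + c 3 * b 3)
    (hs62 : s 5 = s 1) (hs35 : s 2 = s 4)
    (hs1 : s 0 = 0) (hs4 : s 3 = 0) :
    Qp b c s 0 = Qp b c s 3 ∧ Qm b c s 0 = Qm b c s 3 := by
  have h : DietmaierConditions b c s := ⟨hb61, hb34, hb25, hc25, hf, hs62, hs35, hs1, hs4⟩
  exact ⟨h.Qp_three_eq_Qp_zero.symm, h.flip_signs.Qp_three_eq_Qp_zero.symm⟩
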